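/- Let (V,β,ρ) be a representation of a regular Hom-Lie algebra (g, [·,·], φ) with β ∈ GL(V) invertible. Define ρ⋆ : g → gl(V*) by ⟨ρ⋆(x)(ξ), u⟩ = −⟨ξ, ρ(φ⁻¹(x))(β⁻²(u))⟩. Then ρ⋆ is a representation of g on V* with respect to (β⁻¹)*, i.e. ρ⋆(φ(x))∘(β⁻¹)* = (β⁻¹)*∘ρ⋆(x) and ρ⋆([x,y])∘(β⁻¹)* = ρ⋆(φ(x))∘ρ⋆(y) − ρ⋆(φ(y))∘ρ⋆(x) for all x,y ∈ g. -/

import Mathlib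

open LinearMap Module

/-- A (regular, i.e. multiplicative with invertible structure map) Hom-Lie algebra. -/
structure HomLieAlgebra (K g : Type*) [Field K] [AddCommGroup g] [Module K g] where
  bracket : g →ₗ[K] g →ₗ[K] g
  phi : g ≃ₗ[K] g
  skew : ∀ x y, bracket x y = - bracket y x
  phi_bracket : ∀ x y, phi (bracket x y) = bracket (phi x) (phi y)
  jacobi : ∀ x y z,
    bracket (phi x) (bracket y z) + bracket (phi y) (bracket z x)
      + bracket (phi z) (bracket x y) = 0

variable {K g V : Type*} [Field K] [AddCommGroup g] [Module K g]
  [AddCommGroup V] [Module K V]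

/-- `ρ` is a representation of the Hom-Lie algebra `L` on `V` with respect to `β`. -/
def HomLieAlgebra.IsRep (L : HomLieAlgebra K g) (β : V ≃ₗ[K] V)
    (ρ : g →ₗ[K] V →ₗ[K] V) : Prop :=
  (∀ x u, ρ (L.phi x) (β u) = β (ρ x u)) ∧
  (∀ x y u, ρ (L.bracket x y) (β u) = ρ (L.phi x) (ρ y u) - ρ (L.phi y) (ρ x u))

/-- The dual representation `ρ⋆`: `⟨ρ⋆(x)ξ, u⟩ = −⟨ξ, ρ(φ⁻¹x)(β⁻²u)⟩`. -/
def dualRep (L : HomLieAlgebra K g) (β : V ≃ₗ[K] V) (ρ : g →ₗ[K] V →ₗ[K] V)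
    (x : g) (ξ : Dual K V) : Dual K V :=
  - (ξ ∘ₗ ρ (L.phi.symm x) ∘ₗ β.symm.toLinearMap ∘ₗ β.symm.toLinearMap)

/-! Inverting the axioms of a representation gives `β⁻¹ ∘ ρ(x) = ρ(φ⁻¹x) ∘ β⁻¹` and
`ρ([x,y]) = ρ(φx) ∘ ρ(y) ∘ β⁻¹ − ρ(φy) ∘ ρ(x) ∘ β⁻¹`. Evaluated at a vector `u`, both sides of each
identity for `ρ⋆` are `ξ` applied to words in `ρ` and `β⁻¹`; pushing every `β⁻¹` through to `u`
with these rules brings the two sides to the same normal form, e.g.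
`ξ(ρ(φ⁻¹y) ρ(φ⁻²x) β⁻⁴u) − ξ(ρ(φ⁻¹x) ρ(φ⁻²y) β⁻⁴u)` for the bracket identity. -/

namespace HomLieAlgebra

theorem phi_symm_bracket (L : HomLieAlgebra K g) (x y : g) :
    L.phi.symm (L.bracket x y) = L.bracket (L.phi.symm x) (L.phi.symm y) :=
  L.phi.injective <| by simp only [phi_bracket, LinearEquiv.apply_symm_apply]

namespace IsRep

variable {L : HomLieAlgebra K g} {β : V ≃ₗ[K] V} {ρ : g →ₗ[K] V →ₗ[K] V}

theorem symm_apply (hρ : L.IsRep β ρ) (x : g) (u : V) :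
    β.symm (ρ x u) = ρ (L.phi.symm x) (β.symm u) := by
  rw [LinearEquiv.symm_apply_eq, ← hρ.1, LinearEquiv.apply_symm_apply,
    LinearEquiv.apply_symm_apply]

theorem bracket_apply (hρ : L.IsRep β ρ) (x y : g) (u : V) :
    ρ (L.bracket x y) u = ρ (L.phi x) (ρ y (β.symm u)) - ρ (L.phi y) (ρ x (β.symm u)) := by
  simpa only [LinearEquiv.apply_symm_apply] using hρ.2 x y (β.symm u)

end IsRep

end HomLieAlgebra

theorem dualRep_apply (L : HomLieAlgebra K g) (β : V ≃ₗ[K] V) (ρ : g →ₗ[K] V →ₗ[K] V)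
    (x : g) (ξ : Dual K V) (u : V) :
    dualRep L β ρ x ξ u = -ξ (ρ (L.phi.symm x) (β.symm (β.symm u))) :=
  rfl

/-- `ρ⋆` is a representation of `g` on `V*` with respect to `(β⁻¹)*`,
where `(β⁻¹)* ξ = ξ ∘ β⁻¹`. -/
theorem dualRep_isRep (L : HomLieAlgebra K g) (β : V ≃ₗ[K] V)
    (ρ : g →ₗ[K] V →ₗ[K] V) (hρ : L.IsRep β ρ) :
    (∀ (x : g) (ξ : Dual K V),
      dualRep L β ρ (L.phi x) (ξ ∘ₗ β.symm.toLinearMap)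
        = (dualRep L β ρ x ξ) ∘ₗ β.symm.toLinearMap) ∧
    (∀ (x y : g) (ξ : Dual K V),
      dualRep L β ρ (L.bracket x y) (ξ ∘ₗ β.symm.toLinearMap)
        = dualRep L β ρ (L.phi x) (dualRep L β ρ y ξ)
          - dualRep L β ρ (L.phi y) (dualRep L β ρ x ξ)) := by
  refine ⟨fun x ξ => LinearMap.ext fun u => ?_, fun x y ξ => LinearMap.ext fun u => ?_⟩
  · simp only [dualRep_apply, comp_apply, LinearEquiv.coe_coe, LinearEquiv.symm_apply_apply,
      hρ.symm_apply]
  · simp only [dualRep_apply, comp_apply, LinearEquiv.coe_coe, LinearEquiv.symm_apply_apply,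
      L.phi_symm_bracket, hρ.bracket_apply, LinearEquiv.apply_symm_apply, hρ.symm_apply,
      LinearMap.sub_apply, map_sub, neg_neg]
    abel
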